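/- (Total contribution of one facility's length) In any permutation π, the total SRFLP objective can be written as F(π) = Σ_{i<j} w_{ij}(ℓ_i+ℓ_j)/2 + Σ_k ℓ_k · S_k(π), where S_k(π) = Σ over pairs (i,j) with k strictly between i and j in π of w_{ij}. In particular, for fixed weights, the permutation-dependent part of the objective is a linear functional of the lengths with coefficients S_k(π). -/
import Mathlib


/-- Facility `a` lies strictly between facilities `b` and `c` in the arrangement `π`. -/
def betw {n : ℕ} (π : Equiv.Perm (Fin n)) (b a c : Fin n) : Prop :=
  (π.symm b < π.symm a ∧ π.symm a < π.symm c) ∨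
  (π.symm c < π.symm a ∧ π.symm a < π.symm b)

/-- Center-to-center distance between the facilities at positions `p` and `q`
(symmetric in `p`, `q`). -/
noncomputable def pdist (n : ℕ) (ℓ : Fin n → ℝ) (π : Equiv.Perm (Fin n)) (p q : Fin n) : ℝ :=
  ℓ (π p) / 2 + (∑ k ∈ Finset.Ioo (min p q) (max p q), ℓ (π k)) + ℓ (π q) / 2

open Classical in
/-- Total contribution of each facility's length: the SRFLP objective satisfies
`F(π) = ∑_{i<j} w_{ij}(ℓ_i+ℓ_j)/2 + ∑_k ℓ_k · S_k(π)`, where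
`S_k(π) = ∑_{i<j, k strictly between i and j in π} w_{ij}`. In particular, for fixed
weights, the permutation-dependent part of the objective is a linear functional of the
lengths with coefficients `S_k(π)`. -/
theorem stmt17 (n : ℕ) (ℓ : Fin n → ℝ) (w : Fin n → Fin n → ℝ)
    (hℓ : ∀ f, 0 < ℓ f) (hw : ∀ a b, w a b = w b a) (π : Equiv.Perm (Fin n)) :
    (∑ i : Fin n, ∑ j ∈ Finset.Ioi i, w i j * pdist n ℓ π (π.symm i) (π.symm j)) =
      (∑ i : Fin n, ∑ j ∈ Finset.Ioi i, w i j * ((ℓ i + ℓ j) / 2)) +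
        ∑ k : Fin n, ℓ k *
          (∑ i : Fin n, ∑ j ∈ Finset.Ioi i, if betw π i k j then w i j else 0) := by

  have key : ∀ i j : Fin n,
      pdist n ℓ π (π.symm i) (π.symm j)
        = (ℓ i + ℓ j) / 2 + ∑ m : Fin n, if betw π i m j then ℓ m else 0 := by
    intro i j
    have hab : ∀ k : Fin n,
        (k ∈ Finset.Ioo (min (π.symm i) (π.symm j)) (max (π.symm i) (π.symm j)))
          ↔ betw π i (π k) j := by
      intro k
      unfold betw
      simp only [Equiv.symm_apply_apply, Finset.mem_Ioo, min_lt_iff, lt_max_iff]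
      constructor
      · rintro ⟨h1 | h1, h2 | h2⟩
        · exact absurd h2 (lt_asymm h1)
        · exact Or.inl ⟨h1, h2⟩
        · exact Or.inr ⟨h1, h2⟩
        · exact absurd h2 (lt_asymm h1)
      · rintro (⟨h1, h2⟩ | ⟨h1, h2⟩)
        · exact ⟨Or.inl h1, Or.inr h2⟩
        · exact ⟨Or.inr h1, Or.inl h2⟩
    have hsum : (∑ m : Fin n, if betw π i m j then ℓ m else 0)
        = ∑ k ∈ Finset.Ioo (min (π.symm i) (π.symm j)) (max (π.symm i) (π.symm j)), ℓ (π k) := by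
      rw [← Equiv.sum_comp π (fun m => if betw π i m j then ℓ m else 0)]
      rw [Finset.sum_congr rfl (fun k _ => by
        rw [if_congr (Iff.symm (hab k)) rfl rfl])]
      rw [Finset.sum_ite_mem, Finset.univ_inter]
    rw [hsum]
    unfold pdist
    simp only [Equiv.apply_symm_apply]
    ring
  have step : ∀ i : Fin n, ∀ j ∈ Finset.Ioi i,
      w i j * pdist n ℓ π (π.symm i) (π.symm j)
        = w i j * ((ℓ i + ℓ j) / 2)
          + ∑ m : Fin n, ℓ m * (if betw π i m j then w i j else 0) := by
    intro i j _
    rw [key i j, mul_add, Finset.mul_sum]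
    congr 1
    refine Finset.sum_congr rfl fun m _ => ?_
    by_cases h : betw π i m j <;> simp [h, mul_comm]
  calc (∑ i : Fin n, ∑ j ∈ Finset.Ioi i, w i j * pdist n ℓ π (π.symm i) (π.symm j))
      = ∑ i : Fin n, ∑ j ∈ Finset.Ioi i,
          (w i j * ((ℓ i + ℓ j) / 2)
            + ∑ m : Fin n, ℓ m * (if betw π i m j then w i j else 0)) := by
        exact Finset.sum_congr rfl fun i _ => Finset.sum_congr rfl fun j hj => step i j hj
    _ = (∑ i : Fin n, ∑ j ∈ Finset.Ioi i, w i j * ((ℓ i + ℓ j) / 2))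
          + ∑ i : Fin n, ∑ j ∈ Finset.Ioi i,
              ∑ m : Fin n, ℓ m * (if betw π i m j then w i j else 0) := by
        rw [← Finset.sum_add_distrib]
        exact Finset.sum_congr rfl fun i _ => Finset.sum_add_distrib
    _ = _ := by
        congr 1
        rw [Finset.sum_congr rfl fun i _ => Finset.sum_comm, Finset.sum_comm]
        refine Finset.sum_congr rfl fun m _ => ?_
        rw [Finset.mul_sum]
        refine Finset.sum_congr rfl fun i _ => ?_
        rw [Finset.mul_sum]
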